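/- Let ω_V = (i/2) ω₃ ∧ ω̄₃ be the 'vertical' 2-form on ℂ³, where (ω₁,ω₂,ω₃) is the dual basis of the standard basis of ℂ³. Then the restriction of ω_V to the real 3-plane W_θ = T_θ(ℝ³) has pointwise norm (1/2)|cos(2θ)|. Equivalently, if e₁,e₂,e₃ is the image of the standard orthonormal basis of ℝ³ under T_θ, then |ω_V(e₂,e₃)| = (1/2)|cos 2θ|. -/

import Mathlib

open Complex

/-- The matrix `T_θ ∈ SU(3)`. -/
noncomputable def Tmat (θ : ℝ) : Matrix (Fin 3) (Fin 3) ℂ :=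
  !![1, 0, 0;
     0, -I * exp (-(θ : ℂ) * I) / (Real.sqrt 2 : ℂ), exp ((θ : ℂ) * I) / (Real.sqrt 2 : ℂ);
     0, -exp (-(θ : ℂ) * I) / (Real.sqrt 2 : ℂ), I * exp ((θ : ℂ) * I) / (Real.sqrt 2 : ℂ)]

/-- The vertical 2-form `ω_V = (i/2) ω₃ ∧ ω̄₃` evaluated on a pair of vectors of `ℂ³`:
`ω_V(u,v) = (i/2)(u₃ v̄₃ − v₃ ū₃)`, which is a real number. -/
noncomputable def omegaV (u v : Fin 3 → ℂ) : ℝ :=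
  ((I / 2) * (u 2 * star (v 2) - v 2 * star (u 2))).re

/-- The `j`-th column of `T_θ`, i.e. the image of the `j`-th standard basis vector of `ℝ³`. -/
noncomputable def col (θ : ℝ) (j : Fin 3) : Fin 3 → ℂ := fun i => Tmat θ i j

open ComplexConjugate

/-! The third coordinates of `e₂, e₃` are `-e^{-iθ}/√2` and `i e^{iθ}/√2`, so
`u₃ v̄₃ = i e^{-2iθ}/2`, whose imaginary part is `cos 2θ / 2`; and `ω_V(u, v) = -Im (u₃ v̄₃)`. -/

theorem omegaV_eq_neg_im (u v : Fin 3 → ℂ) : omegaV u v = -(u 2 * star (v 2)).im := by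
  have hconj : v 2 * star (u 2) = conj (u 2 * star (v 2)) := by
    simp only [star_def]
    rw [map_mul, conj_conj, mul_comm]
  rw [omegaV, hconj, sub_conj]
  simp

theorem col_one_two (θ : ℝ) : col θ 1 2 = -exp (-(θ : ℂ) * I) / (Real.sqrt 2 : ℂ) := rfl

theorem col_two_two (θ : ℝ) : col θ 2 2 = I * exp ((θ : ℂ) * I) / (Real.sqrt 2 : ℂ) := rfl

theorem col_one_two_mul_star_col_two_two (θ : ℝ) :
    col θ 1 2 * star (col θ 2 2) = I * exp ((-(2 * θ) : ℝ) * I) / 2 := by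
  have hsqrt : (Real.sqrt 2 : ℂ) * (Real.sqrt 2 : ℂ) = 2 := by
    rw [← ofReal_mul, Real.mul_self_sqrt zero_le_two, ofReal_ofNat]
  have hstar : star (exp ((θ : ℂ) * I)) = exp (-(θ : ℂ) * I) := by
    rw [star_def, ← exp_conj, map_mul, conj_ofReal, conj_I, mul_neg, neg_mul]
  have hexp : exp (-(θ : ℂ) * I) * exp (-(θ : ℂ) * I) = exp ((-(2 * θ) : ℝ) * I) := by
    rw [← exp_add]
    push_cast
    ring_nf
  rw [col_one_two, col_two_two, star_div₀, star_mul', hstar, star_def, conj_I, conj_ofReal, ← hsqrt,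
    ← hexp]
  field_simp

theorem omegaV_col_one_col_two (θ : ℝ) :
    omegaV (col θ 1) (col θ 2) = -Real.cos (2 * θ) / 2 := by
  rw [omegaV_eq_neg_im, col_one_two_mul_star_col_two_two]
  rw [div_ofNat_im, I_mul_im, exp_ofReal_mul_I_re, Real.cos_neg]
  ring

theorem stmt_5 (θ : ℝ) : |omegaV (col θ 1) (col θ 2)| = (1 / 2) * |Real.cos (2 * θ)| := by
  rw [omegaV_col_one_col_two, abs_div, abs_neg, abs_two]
  ring
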